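/- arXiv:math/0407361 — 3 statements merged into one kernel-verified Lean document; each statement's English description precedes it below -/
import Mathlib

section
/- Let c = {(x,y,0,0) ∈ S³} and let g be a great circle in S³ disjoint from c. Then for every θ, the great circle g intersects the hemisphere H_θ = {(x, y, r cos θ, r sin θ) ∈ S³ : r > 0} in exactly one point. -/
open Real

noncomputable section

abbrev E4 := EuclideanSpace ℝ (Fin 4)

def S3 : Set E4 := Metric.sphere 0 1

def Ccirc : Set E4 := {v ∈ S3 | v 2 = 0 ∧ v 3 = 0}

def Hemi (θ : ℝ) : Set E4 :=
  {v ∈ S3 | ∃ r : ℝ, 0 < r ∧ v 2 = r * Real.cos θ ∧ v 3 = r * Real.sin θ}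

/-- A great circle `g = Q ∩ S³` disjoint from the standard circle `c` meets each
hemisphere `H_θ` in exactly one point. -/
theorem great_circle_meets_hemisphere_once (Q : Submodule ℝ E4)
    (hQ : Module.finrank ℝ Q = 2)
    (hdisj : ((Q : Set E4) ∩ S3) ∩ Ccirc = ∅) (θ : ℝ) :
    ∃! x : E4, x ∈ (Q : Set E4) ∩ S3 ∧ x ∈ Hemi θ := by
  -- Key: any x ∈ Q with x 2 = 0 and x 3 = 0 is zero.
  have keyA : ∀ x : E4, x ∈ Q → x 2 = 0 → x 3 = 0 → x = 0 := by
    intro x hxQ h2 h3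
    by_contra hx
    have hnorm : ‖x‖ ≠ 0 := norm_ne_zero_iff.mpr hx
    set y : E4 := ‖x‖⁻¹ • x with hy
    have hyQ : y ∈ Q := Q.smul_mem _ hxQ
    have hyS : y ∈ S3 := by
      simp only [S3, mem_sphere_zero_iff_norm, hy, norm_smul, norm_inv, norm_norm]
      field_simp
    have hy2 : y 2 = 0 := by simp [hy, PiLp.smul_apply, h2]
    have hy3 : y 3 = 0 := by simp [hy, PiLp.smul_apply, h3]
    have : y ∈ ((Q : Set E4) ∩ S3) ∩ Ccirc := ⟨⟨hyQ, hyS⟩, hyS, hy2, hy3⟩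
    rw [hdisj] at this
    exact this
  -- linear map to ℝ × ℝ
  let f : Q →ₗ[ℝ] ℝ × ℝ :=
    LinearMap.prod ((EuclideanSpace.proj (2 : Fin 4)).toLinearMap.comp Q.subtype)
      ((EuclideanSpace.proj (3 : Fin 4)).toLinearMap.comp Q.subtype)
  have hf : ∀ x : Q, f x = ((x : E4) 2, (x : E4) 3) := fun x => rfl
  have hinj : Function.Injective f := by
    rw [injective_iff_map_eq_zero]
    intro a ha
    rw [hf] at ha
    have h2 : (a : E4) 2 = 0 := congrArg Prod.fst ha
    have h3 : (a : E4) 3 = 0 := congrArg Prod.snd ha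
    exact Subtype.ext (keyA _ a.2 h2 h3)
  have hsurj : Function.Surjective f := by
    have hfin : FiniteDimensional ℝ Q := by
      have : Module.finrank ℝ Q ≠ 0 := by omega
      exact FiniteDimensional.of_finrank_pos (by omega)
    have hr : Module.finrank ℝ (LinearMap.range f) = Module.finrank ℝ (ℝ × ℝ) := by
      rw [LinearMap.finrank_range_of_inj hinj, hQ]
      simp
    rw [← LinearMap.range_eq_top]
    exact Submodule.eq_top_of_finrank_eq hr
  obtain ⟨w, hw⟩ := hsurj (Real.cos θ, Real.sin θ)
  have hw2 : (w : E4) 2 = Real.cos θ := by rw [hf] at hw; exact congrArg Prod.fst hw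
  have hw3 : (w : E4) 3 = Real.sin θ := by rw [hf] at hw; exact congrArg Prod.snd hw
  have hwne : (w : E4) ≠ 0 := by
    intro h
    have h2 : (w : E4) 2 = 0 := by rw [h]; rfl
    have := Real.sin_sq_add_cos_sq θ
    rw [← hw2] at this
    have h3 : (w : E4) 3 = 0 := by rw [h]; rfl
    rw [← hw3, h2, h3] at this
    norm_num at this
  have hwn : (0 : ℝ) < ‖(w : E4)‖ := norm_pos_iff.mpr hwne
  set x : E4 := ‖(w : E4)‖⁻¹ • (w : E4) with hx
  have hxQ : x ∈ Q := Q.smul_mem _ w.2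
  have hxS : x ∈ S3 := by
    simp only [S3, mem_sphere_zero_iff_norm, hx, norm_smul, norm_inv, norm_norm]
    field_simp
  have hx2 : x 2 = ‖(w : E4)‖⁻¹ * Real.cos θ := by simp [hx, PiLp.smul_apply, hw2]
  have hx3 : x 3 = ‖(w : E4)‖⁻¹ * Real.sin θ := by simp [hx, PiLp.smul_apply, hw3]
  refine ⟨x, ⟨⟨hxQ, hxS⟩, hxS, ‖(w : E4)‖⁻¹, inv_pos.mpr hwn, hx2, hx3⟩, ?_⟩
  rintro y ⟨⟨hyQ, hyS⟩, -, r, hr, hy2, hy3⟩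
  -- y - r • w has vanishing coords 2,3, lies in Q, so y = r • w
  have hdQ : y - r • (w : E4) ∈ Q := Q.sub_mem hyQ (Q.smul_mem _ w.2)
  have hd2 : (y - r • (w : E4)) 2 = 0 := by
    simp [PiLp.sub_apply, PiLp.smul_apply, hy2, hw2]
  have hd3 : (y - r • (w : E4)) 3 = 0 := by
    simp [PiLp.sub_apply, PiLp.smul_apply, hy3, hw3]
  have hyw : y = r • (w : E4) := sub_eq_zero.mp (keyA _ hdQ hd2 hd3)
  have hny : ‖y‖ = 1 := mem_sphere_zero_iff_norm.mp hyS
  have hrw : r * ‖(w : E4)‖ = 1 := by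
    rw [hyw, norm_smul, Real.norm_eq_abs, abs_of_pos hr] at hny; exact hny
  have hrval : r = ‖(w : E4)‖⁻¹ := by
    field_simp
    linarith
  rw [hyw, hrval, hx]
end
end

section
/- Identify S³ with the unit sphere in ℂ² and let g = {(z,w) ∈ S³ : z ∈ ℝ, w ∈ ℝ} be the real great circle. For coprime p, q and φ = φ_{p/q}(z,w) = (e^{2πi/q} z, e^{2πip/q} w), any two circles in the orbit {φᵏ(g) : k ∈ ℤ} are either equal or disjoint. -/
/-! With `ζ = e^{2πi/q}`, `φ` is the diagonal map `diag(ζ, ζ^p)`, so `φᵐ = diag(ζᵐ, ζ^{pm})`, and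
since `φ` is injective it suffices to compare `g` with `φᵐ(g)`. A diagonal map `diag(c, d)` with
`|c| = |d| = 1` maps `g` onto itself when `c, d = ±1`; otherwise, if neither `c` nor `d` is real,
`diag(c, d)(g)` misses `g`, because every point of `g` has a nonzero real coordinate. As `ζ^q = 1`
and `gcd(p, q) = 1`, `ζ^{2m} = 1` exactly when `ζ^{2pm} = 1`, so `ζᵐ` and `ζ^{pm}` are real
together. -/

open Real

noncomputable section

abbrev EC := EuclideanSpace ℂ (Fin 2)

def S3c : Set EC := Metric.sphere 0 1

def mk2 (a b : ℂ) : EC := (WithLp.equiv 2 (Fin 2 → ℂ)).symm ![a, b]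

def phi (p q : ℤ) (v : EC) : EC :=
  mk2 (Complex.exp (2 * (π : ℂ) * Complex.I / (q : ℂ)) * v 0)
      (Complex.exp (2 * (π : ℂ) * Complex.I * (p : ℂ) / (q : ℂ)) * v 1)

/-- The real great circle `g = {(z,w) ∈ S³ : z, w ∈ ℝ}`. -/
def gReal : Set EC := {v ∈ S3c | (v 0).im = 0 ∧ (v 1).im = 0}

theorem Function.Injective.iterate_image_eq_or_disjoint {α : Type*} {f : α → α}
    (hf : Function.Injective f) {s : Set α}
    (h : ∀ m, f^[m] '' s = s ∨ Disjoint s (f^[m] '' s)) (j k : ℕ) :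
    f^[j] '' s = f^[k] '' s ∨ Disjoint (f^[j] '' s) (f^[k] '' s) := by
  wlog hjk : j ≤ k generalizing j k
  · exact (this k j (le_of_not_ge hjk)).imp Eq.symm fun h ↦ h.symm
  obtain ⟨m, rfl⟩ := Nat.exists_eq_add_of_le hjk
  rw [Function.iterate_add, Set.image_comp, Set.image_eq_image (hf.iterate j),
    Set.disjoint_image_iff (hf.iterate j)]
  exact (h m).imp Eq.symm id

theorem eq_one_of_zpow_eq_one_of_gcd_eq_one {G₀ : Type*} [GroupWithZero G₀] {x : G₀}
    (hx : x ≠ 0) {p q : ℤ} (hpq : Int.gcd p q = 1) (hp : x ^ p = 1) (hq : x ^ q = 1) :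
    x = 1 := by
  have hbezout := Int.gcd_eq_gcd_ab p q
  rw [hpq, Nat.cast_one] at hbezout
  rw [← zpow_one x, hbezout, zpow_add₀ hx, zpow_mul, zpow_mul, hp, hq, one_zpow, one_zpow,
    one_mul]

theorem zpow_pow_eq_one_iff_of_gcd_eq_one {G₀ : Type*} [GroupWithZero G₀] {x : G₀}
    (hx : x ≠ 0) {p q : ℤ} (hpq : Int.gcd p q = 1) (hq : x ^ q = 1) (n : ℕ) :
    (x ^ p) ^ n = 1 ↔ x ^ n = 1 := by
  have hxn : (x ^ n) ^ q = 1 := by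
    rw [← zpow_natCast, ← zpow_mul, mul_comm, zpow_mul, hq, one_zpow]
  rw [← zpow_natCast, ← zpow_mul, mul_comm, zpow_mul, zpow_natCast]
  exact ⟨fun h ↦ eq_one_of_zpow_eq_one_of_gcd_eq_one (pow_ne_zero n hx) hpq h hxn,
    fun h ↦ by rw [h, one_zpow]⟩

theorem Complex.sq_eq_one_of_norm_eq_one_of_im_eq_zero {c : ℂ} (hc : ‖c‖ = 1)
    (him : c.im = 0) : c ^ 2 = 1 := by
  have hre : c.re ^ 2 = 1 := by
    rw [← Complex.sq_norm_sub_sq_im, hc, him]; norm_num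
  rw [← Complex.re_add_im c, him, Complex.ofReal_zero, zero_mul, add_zero, ← Complex.ofReal_pow,
    hre, Complex.ofReal_one]

lemma EC.ext {v w : EC} (h0 : v 0 = w 0) (h1 : v 1 = w 1) : v = w := by
  ext i; fin_cases i <;> assumption

lemma mem_gReal_iff {v : EC} : v ∈ gReal ↔ ‖v‖ = 1 ∧ (v 0).im = 0 ∧ (v 1).im = 0 := by
  simp [gReal, S3c]

lemma re_ne_zero_or_re_ne_zero_of_mem_gReal {v : EC} (hv : v ∈ gReal) :
    (v 0).re ≠ 0 ∨ (v 1).re ≠ 0 := by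
  obtain ⟨hnorm, him0, him1⟩ := mem_gReal_iff.1 hv
  by_contra! hre
  have hv0 : v = 0 := EC.ext (Complex.ext hre.1 him0) (Complex.ext hre.2 him1)
  simp [hv0] at hnorm

def diagMap (c d : ℂ) (v : EC) : EC := mk2 (c * v 0) (d * v 1)

@[simp] lemma diagMap_apply_zero (c d : ℂ) (v : EC) : diagMap c d v 0 = c * v 0 := rfl
@[simp] lemma diagMap_apply_one (c d : ℂ) (v : EC) : diagMap c d v 1 = d * v 1 := rfl

lemma diagMap_iterate (c d : ℂ) (n : ℕ) : (diagMap c d)^[n] = diagMap (c ^ n) (d ^ n) := by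
  induction n with
  | zero => funext v; exact EC.ext (one_mul _).symm (one_mul _).symm
  | succ n ih =>
    funext v
    rw [Function.iterate_succ_apply', ih]
    exact EC.ext (by simp only [diagMap_apply_zero]; ring) (by simp only [diagMap_apply_one]; ring)

lemma diagMap_injective {c d : ℂ} (hc : c ≠ 0) (hd : d ≠ 0) :
    Function.Injective (diagMap c d) := fun _ _ h ↦
  EC.ext (mul_left_cancel₀ hc (congrArg (· 0) h)) (mul_left_cancel₀ hd (congrArg (· 1) h))

lemma diagMap_involutive {c d : ℂ} (hc : c ^ 2 = 1) (hd : d ^ 2 = 1) :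
    Function.Involutive (diagMap c d) := fun v ↦
  EC.ext (by simp [← mul_assoc, ← sq, hc]) (by simp [← mul_assoc, ← sq, hd])

lemma norm_diagMap {c d : ℂ} (hc : ‖c‖ = 1) (hd : ‖d‖ = 1) (v : EC) :
    ‖diagMap c d v‖ = ‖v‖ := by
  simp [EuclideanSpace.norm_eq, Fin.sum_univ_two, hc, hd]

lemma Complex.norm_eq_one_and_im_eq_zero_of_sq_eq_one {c : ℂ} (hc : c ^ 2 = 1) :
    ‖c‖ = 1 ∧ c.im = 0 := by
  rcases sq_eq_one_iff.1 hc with rfl | rfl <;> simp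

lemma mapsTo_diagMap_gReal {c d : ℂ} (hc : c ^ 2 = 1) (hd : d ^ 2 = 1) :
    Set.MapsTo (diagMap c d) gReal gReal := by
  obtain ⟨hc, hc'⟩ := Complex.norm_eq_one_and_im_eq_zero_of_sq_eq_one hc
  obtain ⟨hd, hd'⟩ := Complex.norm_eq_one_and_im_eq_zero_of_sq_eq_one hd
  intro v hv
  obtain ⟨hnorm, him0, him1⟩ := mem_gReal_iff.1 hv
  exact mem_gReal_iff.2 ⟨by rw [norm_diagMap hc hd, hnorm], by simp [Complex.mul_im, hc', him0],
    by simp [Complex.mul_im, hd', him1]⟩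

lemma diagMap_image_gReal_of_sq_eq_one {c d : ℂ} (hc : c ^ 2 = 1) (hd : d ^ 2 = 1) :
    diagMap c d '' gReal = gReal := by
  have hmaps := mapsTo_diagMap_gReal hc hd
  exact hmaps.image_subset.antisymm <| by
    rw [(diagMap_involutive hc hd).image_eq_preimage_symm]; exact hmaps

lemma im_eq_zero_or_im_eq_zero_of_diagMap_mem_gReal {c d : ℂ} {v : EC} (hv : v ∈ gReal)
    (hcdv : diagMap c d v ∈ gReal) : c.im = 0 ∨ d.im = 0 := by
  obtain ⟨-, him0, him1⟩ := mem_gReal_iff.1 hv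
  obtain ⟨-, hcim, hdim⟩ := mem_gReal_iff.1 hcdv
  simp only [diagMap_apply_zero, diagMap_apply_one, Complex.mul_im, him0, him1, mul_zero,
    zero_add] at hcim hdim
  rcases re_ne_zero_or_re_ne_zero_of_mem_gReal hv with h | h
  · exact .inl ((mul_eq_zero.1 hcim).resolve_right h)
  · exact .inr ((mul_eq_zero.1 hdim).resolve_right h)

lemma diagMap_image_gReal_eq_or_disjoint {c d : ℂ} (hc : ‖c‖ = 1) (hd : ‖d‖ = 1)
    (hcd : c ^ 2 = 1 ↔ d ^ 2 = 1) :
    diagMap c d '' gReal = gReal ∨ Disjoint gReal (diagMap c d '' gReal) := by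
  by_cases hc2 : c ^ 2 = 1
  · exact .inl (diagMap_image_gReal_of_sq_eq_one hc2 (hcd.1 hc2))
  refine .inr (Set.disjoint_left.2 ?_)
  rintro _ hcdv ⟨v, hv, rfl⟩
  rcases im_eq_zero_or_im_eq_zero_of_diagMap_mem_gReal hv hcdv with him | him
  · exact hc2 (Complex.sq_eq_one_of_norm_eq_one_of_im_eq_zero hc him)
  · exact hc2 (hcd.2 (Complex.sq_eq_one_of_norm_eq_one_of_im_eq_zero hd him))

lemma phi_eq_diagMap (p q : ℤ) :
    phi p q = diagMap (Complex.exp (2 * π * Complex.I / q))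
      (Complex.exp (2 * π * Complex.I / q) ^ p) := by
  funext v
  rw [phi, diagMap, ← Complex.exp_int_mul, mul_div_assoc', mul_comm (p : ℂ)]

lemma exp_two_pi_I_div_zpow_self (q : ℤ) : Complex.exp (2 * π * Complex.I / q) ^ q = 1 := by
  rcases eq_or_ne q 0 with rfl | hq
  · simp
  rw [← Complex.exp_int_mul, mul_div_cancel₀ _ (Int.cast_ne_zero.2 hq), Complex.exp_two_pi_mul_I]

lemma norm_exp_two_pi_I_div (q : ℤ) : ‖Complex.exp (2 * π * Complex.I / q)‖ = 1 := by
  simp [Complex.norm_exp]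

theorem phi_orbit_circles_eq_or_disjoint_general (p q : ℤ)
    (hpq : Int.gcd p q = 1) (j k : ℕ) :
    (phi p q)^[j] '' gReal = (phi p q)^[k] '' gReal ∨
      Disjoint ((phi p q)^[j] '' gReal) ((phi p q)^[k] '' gReal) := by
  rw [phi_eq_diagMap]
  set ζ := Complex.exp (2 * π * Complex.I / q)
  have hζ0 : ζ ≠ 0 := Complex.exp_ne_zero _
  have hζ : ‖ζ‖ = 1 := norm_exp_two_pi_I_div q
  refine (diagMap_injective hζ0 (zpow_ne_zero p hζ0)).iterate_image_eq_or_disjoint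
    (fun m ↦ ?_) j k
  rw [diagMap_iterate]
  refine diagMap_image_gReal_eq_or_disjoint (by simp [hζ]) (by simp [norm_zpow, hζ]) ?_
  rw [← pow_mul, ← pow_mul]
  exact (zpow_pow_eq_one_iff_of_gcd_eq_one hζ0 hpq (exp_two_pi_I_div_zpow_self q) _).symm

/-- Any two circles in the orbit `{φᵏ(g)}` of the real great circle under
`φ_{p/q}` are either equal or disjoint. -/
theorem phi_orbit_circles_eq_or_disjoint (p q : ℤ) (hq : 1 ≤ q)
    (hpq : Int.gcd p q = 1) (j k : ℕ) :
    (phi p q)^[j] '' gReal = (phi p q)^[k] '' gReal ∨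
      Disjoint ((phi p q)^[j] '' gReal) ((phi p q)^[k] '' gReal) :=
  phi_orbit_circles_eq_or_disjoint_general p q hpq j k
end
end

section
/- Identify S³ with the unit sphere in ℂ², g = {(z,w) ∈ S³ : z, w ∈ ℝ}, and φ(z,w) = (e^{2πi/q} z, e^{2πip/q} w) with q even and gcd(p,q) = 1 (so p is odd). Let g' = {(e^{iπ/q} s, e^{ipπ/q} t) : s, t ∈ ℝ, s² + t² = 1}. Then the orbits ⋃ₖ φᵏ(g) and ⋃ₖ φᵏ(g') are disjoint. -/
open Real

noncomputable section

/-- The great circle `g' = {(e^{iπ/q} s, e^{ipπ/q} t) : s, t ∈ ℝ, s² + t² = 1}`. -/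
def gRot (p q : ℤ) : Set EC :=
  {v | ∃ s t : ℝ, s ^ 2 + t ^ 2 = 1 ∧
    v 0 = Complex.exp ((π : ℂ) * Complex.I / (q : ℂ)) * (s : ℂ) ∧
    v 1 = Complex.exp ((p : ℂ) * (π : ℂ) * Complex.I / (q : ℂ)) * (t : ℂ)}

/-!
A point of `φᵏ(g)` has real coordinates multiplied by powers of `ζ = e^{2πi/q}` resp. `ζ^p`,
while a point of `φᵐ(g')` has coordinates `ζ^m e^{iπ/q} s` resp. `ζ^{pm} e^{ipπ/q} t`.
If they coincide, then in a coordinate where `s` (resp. `t`) is nonzero, a real number equals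
`e^{iπd/q}` times a nonzero real, with `d = 2(m - k) + 1` (resp. `p(2(m - k) + 1)`) odd.
Since `q` is even, `q ∤ d`, so `sin(πd/q) ≠ 0` and that product is not real.
-/

open Complex

lemma Real.sin_pi_mul_div_ne_zero {d q : ℤ} (hq : q ≠ 0) (hd : ¬ q ∣ d) :
    Real.sin (π * d / q) ≠ 0 := by
  rw [Ne, Real.sin_eq_zero_iff]
  rintro ⟨n, hn⟩
  have hqR : (q : ℝ) ≠ 0 := by exact_mod_cast hq
  field_simp at hn
  exact hd ⟨n, by rw [mul_comm]; exact_mod_cast hn.symm⟩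

lemma Complex.ofReal_ne_exp_mul_I_mul_ofReal {θ : ℝ} (hθ : Real.sin θ ≠ 0) (x : ℝ) {s : ℝ}
    (hs : s ≠ 0) : (x : ℂ) ≠ exp (θ * I) * s := by
  intro h
  have him := congrArg im h
  simp only [ofReal_im, mul_im, ofReal_re, exp_ofReal_mul_I_im, mul_zero, zero_add] at him
  exact mul_ne_zero hθ hs him.symm

lemma Complex.exp_pow_mul_ofReal_ne {a q : ℤ} (hq : q ≠ 0) (hqe : Even q) (ha : Odd a)
    (k m : ℕ) (x : ℝ) {s : ℝ} (hs : s ≠ 0) :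
    exp (2 * π * I * a / q) ^ k * x ≠ exp (2 * π * I * a / q) ^ m * (exp (a * π * I / q) * s) := by
  set X : ℂ := 2 * π * I * a / q
  set d : ℤ := a * (2 * (m - k) + 1)
  have hd : ¬ q ∣ d := fun hqd =>
    Int.not_even_iff_odd.mpr (ha.mul (odd_two_mul_add_one _))
      (even_iff_two_dvd.mpr (hqe.two_dvd.trans hqd))
  have hqC : (q : ℂ) ≠ 0 := by exact_mod_cast hq
  have harg : ((π * d / q : ℝ) : ℂ) * I = m * X + a * π * I / q - k * X := by
    simp only [X, d]; push_cast; field_simp; ring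
  intro h
  refine ofReal_ne_exp_mul_I_mul_ofReal (Real.sin_pi_mul_div_ne_zero hq hd) x hs ?_
  rw [harg, exp_sub, exp_add, exp_nat_mul, exp_nat_mul, div_mul_eq_mul_div,
    eq_div_iff (pow_ne_zero _ (exp_ne_zero _))]
  linear_combination h

lemma phi_iterate_apply_zero (p q : ℤ) (k : ℕ) (v : EC) :
    (phi p q)^[k] v 0 = exp (2 * π * I / q) ^ k * v 0 := by
  induction k with
  | zero => simp
  | succ n ih =>
    rw [Function.iterate_succ_apply', pow_succ', mul_assoc, ← ih]
    rfl

lemma phi_iterate_apply_one (p q : ℤ) (k : ℕ) (v : EC) :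
    (phi p q)^[k] v 1 = exp (2 * π * I * p / q) ^ k * v 1 := by
  induction k with
  | zero => simp
  | succ n ih =>
    rw [Function.iterate_succ_apply', pow_succ', mul_assoc, ← ih]
    rfl

lemma Complex.eq_ofReal_re_of_im_eq_zero {z : ℂ} (h : z.im = 0) : z = (z.re : ℂ) :=
  Complex.ext rfl (by simp [h])

theorem orbits_disjoint_general (p q : ℤ) (hq : 1 ≤ q) (hqe : Even q) (hpo : Odd p) :
    Disjoint (⋃ k : ℕ, (phi p q)^[k] '' gReal)
      (⋃ k : ℕ, (phi p q)^[k] '' gRot p q) := by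
  rw [Set.disjoint_left]
  rintro _ hreal hrot
  simp only [Set.mem_iUnion, Set.mem_image] at hreal hrot
  obtain ⟨k, u, ⟨-, hu0, hu1⟩, rfl⟩ := hreal
  obtain ⟨m, w, ⟨s, t, hst, hw0, hw1⟩, hwu⟩ := hrot
  have hq0 : q ≠ 0 := by omega
  by_cases hs : s = 0
  · have ht : t ≠ 0 := by rintro rfl; subst hs; norm_num at hst
    have h1 := congrArg (· 1) hwu
    simp only [phi_iterate_apply_one, hw1] at h1
    rw [eq_ofReal_re_of_im_eq_zero hu1] at h1
    exact exp_pow_mul_ofReal_ne hq0 hqe hpo k m _ ht h1.symm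
  · have h0 := congrArg (· 0) hwu
    simp only [phi_iterate_apply_zero, hw0] at h0
    rw [eq_ofReal_re_of_im_eq_zero hu0] at h0
    exact exp_pow_mul_ofReal_ne (a := 1) hq0 hqe odd_one k m _ hs (by simpa using h0.symm)

/-- For `q` even, `p` odd, `gcd(p,q) = 1`, the `φ`-orbit of the real great
circle `g` and the `φ`-orbit of `g'` are disjoint. -/
theorem orbits_disjoint (p q : ℤ) (hq : 1 ≤ q) (hqe : Even q) (hpo : Odd p)
    (hpq : Int.gcd p q = 1) :
    Disjoint (⋃ k : ℕ, (phi p q)^[k] '' gReal)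
      (⋃ k : ℕ, (phi p q)^[k] '' gRot p q) :=
  orbits_disjoint_general p q hq hqe hpo
end
end
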